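/- arXiv:1606.04679 — 2 statements merged into one kernel-verified Lean document; each statement's English description precedes it below -/
import Mathlib

section
/- Let G be a biconnected outerplanar graph whose vertices are labeled 1,...,n in order along its Hamiltonian cycle, and let {u,v} with u < v be an inner edge of G. Then 1 < v - u < n - 1, and the subgraph of G induced by the vertex set {u, u+1, ..., v} is biconnected and outerplanar, with Hamiltonian cycle formed by the path u, u+1, ..., v along the original cycle together with the edge {u,v}. -/
/-!
The cycle edges `{i, i+1}` all lie in `G`, so the arc `u, u+1, …, v` of the Hamiltonian cycle
is a path whose vertex set is `{u, …, v}`, and closing it with the inner edge `{u, v}` gives a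
Hamiltonian cycle of the induced subgraph. A graph with a Hamiltonian cycle is biconnected:
removing a vertex leaves a Hamiltonian path of the remaining vertices. Outerplanarity passes to
induced subgraphs, since an embedding `H ↪g G` extends to the cones and a minor of `H` is then a
minor of `G`. The bounds `1 < v - u < n - 1` say only that `{u, v}` is not one of the cycle
edges `{u, u+1}` and `{n-1, 0}`.
-/

open SimpleGraph

universe u₁ u₂

variable {V : Type u₁} {W : Type u₂}

/-- `H` is a minor of `G`: there is a branch decomposition, i.e. a partial map
assigning to some vertices of `G` a vertex of `H`, whose branch sets are
nonempty and connected, and such that every edge of `H` is realized by an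
edge of `G` between the corresponding branch sets. -/
def IsMinorOf (H : SimpleGraph W) (G : SimpleGraph V) : Prop :=
  ∃ f : V → Option W,
    (∀ w : W, (G.induce {v | f v = some w}).Connected) ∧
    (∀ w₁ w₂ : W, H.Adj w₁ w₂ →
      ∃ v₁ v₂ : V, f v₁ = some w₁ ∧ f v₂ = some w₂ ∧ G.Adj v₁ v₂)

/-- The cone over `G`: add a new apex vertex adjacent to all vertices of `G`. -/
def cone (G : SimpleGraph V) : SimpleGraph (Option V) :=
  SimpleGraph.fromRel (fun a b =>
    a = none ∨ ∃ u v : V, a = some u ∧ b = some v ∧ G.Adj u v)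

/-- A graph is planar iff it has neither a `K₅` nor a `K₃,₃` minor (Wagner). -/
def Planar (G : SimpleGraph V) : Prop :=
  ¬ IsMinorOf (⊤ : SimpleGraph (Fin 5)) G ∧
  ¬ IsMinorOf (completeBipartiteGraph (Fin 3) (Fin 3)) G

/-- A graph is outerplanar iff the cone over it is planar (equivalently, it
has a planar embedding with all vertices on the outer face). -/
def Outerplanar (G : SimpleGraph V) : Prop := Planar (cone G)

/-- `v` is a cut vertex of `G`: `G` is connected but deleting `v` disconnects it. -/
def IsCutVertex (G : SimpleGraph V) (v : V) : Prop :=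
  G.Connected ∧ ¬ (G.induce {u | u ≠ v}).Connected

/-- `G` is biconnected: connected with no cut vertex. -/
def Biconnected (G : SimpleGraph V) : Prop :=
  G.Connected ∧ ∀ v : V, ¬ IsCutVertex G v

/-- Degree of a vertex, as the cardinality of its neighbour set. -/
noncomputable def deg (G : SimpleGraph V) (v : V) : ℕ := (G.neighborSet v).ncard

/-- Two `a`-`b` walks are internally vertex-disjoint if they share no
vertices other than `a` and `b`. -/
def InternallyDisjoint {G : SimpleGraph V} {a b : V} (p q : G.Walk a b) : Prop :=
  ∀ w : V, w ∈ p.support → w ∈ q.support → w = a ∨ w = b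

/-- A chain of `G` with endpoints `a` and `b`, represented by the path `p`
from `a` to `b`: all internal vertices have degree two, and either both
endpoints have degree greater than two (a path chain), or the chain is a
cycle of degree-two vertices, represented by a Hamiltonian-on-its-support
path between two adjacent vertices `a` and `b` of the cycle. -/
def IsGraphChain (G : SimpleGraph V) {a b : V} (p : G.Walk a b) : Prop :=
  p.IsPath ∧ 2 ≤ p.length ∧
    (∀ v ∈ p.support, v ≠ a → v ≠ b → deg G v = 2) ∧
    ((2 < deg G a ∧ 2 < deg G b) ∨
      (G.Adj a b ∧ ∀ v ∈ p.support, deg G v = 2))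

/-- The graph on the endpoints of the edges in `E'`, with edge set `E'`. -/
def graphOn (E' : Set (Sym2 V)) :
    SimpleGraph {v : V | ∃ e ∈ E', v ∈ e} :=
  (SimpleGraph.fromEdgeSet E').induce {v : V | ∃ e ∈ E', v ∈ e}

section Minors

variable {U : Type*} {G : SimpleGraph V} {H : SimpleGraph U} {K : SimpleGraph W}

@[simp] lemma cone_adj_some_some {x y : V} : (cone G).Adj (some x) (some y) ↔ G.Adj x y := by
  simpa [cone, adj_comm] using Adj.ne

@[simp] lemma cone_adj_none_some {x : V} : (cone G).Adj none (some x) := by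
  simp [cone]

@[simp] lemma cone_adj_some_none {x : V} : (cone G).Adj (some x) none := by
  simp [cone]

def SimpleGraph.Embedding.cone (φ : H ↪g G) : _root_.cone H ↪g _root_.cone G where
  toFun := Option.map φ
  inj' := Option.map_injective φ.injective
  map_rel_iff' := by rintro (_ | x) (_ | y) <;> simp

lemma IsMinorOf.trans_embedding (h : IsMinorOf K H) (φ : H ↪g G) : IsMinorOf K G := by
  classical
  obtain ⟨f, hconn, hadj⟩ := h
  set g : V → Option W := Function.extend φ f fun _ => none
  have hg : ∀ y, g (φ y) = f y := φ.injective.extend_apply f _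
  have hbranch : ∀ w, {x | g x = some w} = φ '' {y | f y = some w} := by
    intro w
    ext x
    by_cases hx : ∃ y, φ y = x
    · obtain ⟨y, rfl⟩ := hx
      simp [hg]
    · simp only [Set.mem_ofPred_eq, g, Function.extend_apply' _ _ _ hx, Set.mem_image]
      exact ⟨nofun, fun ⟨y, _, hy⟩ => (hx ⟨y, hy⟩).elim⟩
  refine ⟨g, fun w => ?_, fun w₁ w₂ hw => ?_⟩
  · rw [hbranch]
    refine (hconn w).map ⟨fun y => ⟨φ y.1, y.1, y.2, rfl⟩, fun h => φ.map_adj_iff.2 h⟩ ?_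
    rintro ⟨_, y, hy, rfl⟩
    exact ⟨⟨y, hy⟩, rfl⟩
  · obtain ⟨v₁, v₂, h₁, h₂, h⟩ := hadj w₁ w₂ hw
    exact ⟨φ v₁, φ v₂, (hg v₁).trans h₁, (hg v₂).trans h₂, φ.map_adj_iff.2 h⟩

lemma Planar.of_embedding (φ : H ↪g G) (h : Planar G) : Planar H :=
  ⟨fun hm => h.1 (hm.trans_embedding φ), fun hm => h.2 (hm.trans_embedding φ)⟩

lemma Outerplanar.of_embedding (φ : H ↪g G) (h : Outerplanar G) : Outerplanar H :=
  Planar.of_embedding φ.cone h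

lemma Outerplanar.induce (h : Outerplanar G) (s : Set V) : Outerplanar (G.induce s) :=
  h.of_embedding (Embedding.induce s)

end Minors

namespace SimpleGraph.Walk

variable [DecidableEq V] {G : SimpleGraph V} {x y : V}

lemma IsPath.isHamiltonian_induce {s : Set V} {p : G.Walk x y} (hp : p.IsPath)
    (hs : ∀ z, z ∈ p.support ↔ z ∈ s) : (p.induce s fun z hz => (hs z).1 hz).IsHamiltonian := by
  refine IsPath.isHamiltonian_of_mem ?_ fun z => ?_
  · exact IsPath.of_map (f := (Embedding.induce s).toHom) (by rwa [map_induce])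
  · simpa [support_induce] using (hs z).2 z.2

lemma IsPath.exists_isHamiltonianCycle_induce {s : Set V} {p : G.Walk x y} (hp : p.IsPath)
    (hs : ∀ z, z ∈ p.support ↔ z ∈ s) (h : G.Adj x y) (he : s(x, y) ∉ p.edges) (hx : x ∈ s) :
    ∃ c : (G.induce s).Walk ⟨x, hx⟩ ⟨x, hx⟩, c.IsHamiltonianCycle ∧
      {e | ∃ e' ∈ c.edges, Sym2.map Subtype.val e' = e} = insert s(x, y) {e | e ∈ p.edges} := by
  set q := p.induce s fun z hz => (hs z).1 hz
  have hq : q.edges.map (Sym2.map Subtype.val) = p.edges := by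
    have := congrArg edges (map_induce p fun z hz => (hs z).1 hz)
    rwa [edges_map] at this
  have h' : (G.induce s).Adj ⟨x, hx⟩ ⟨y, (hs y).1 p.end_mem_support⟩ := h
  refine ⟨cons h' q.reverse, isHamiltonianCycle_iff_isCycle_and_support_count_tail_eq_one.2
    ⟨(cons_isCycle_iff _ _).2 ⟨?_, ?_⟩, ?_⟩, ?_⟩
  · exact (hp.isHamiltonian_induce hs).isPath.reverse
  · intro hmem
    apply he
    rw [← hq]
    simpa [edges_reverse] using List.mem_map_of_mem (f := Sym2.map Subtype.val) hmem
  · exact fun z => by simpa [q] using hp.isHamiltonian_induce hs z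
  · ext e
    simp [edges_reverse, ← hq, eq_comm (a := e)]

lemma IsHamiltonianCycle.connected {p : G.Walk x x} (hp : p.IsHamiltonianCycle) : G.Connected :=
  (connected_iff_exists_forall_reachable _).2
    ⟨x, fun z => (p.takeUntil z (hp.mem_support z)).reachable⟩

lemma IsHamiltonianCycle.exists_adj_isHamiltonian {p : G.Walk x x} (hp : p.IsHamiltonianCycle)
    (z : V) : ∃ y, G.Adj z y ∧ ∃ r : G.Walk y z, r.IsHamiltonian := by
  have hq := hp.rotate (hp.mem_support z)
  generalize p.rotate z (hp.mem_support z) = q at hq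
  cases q with
  | nil => exact (hq.not_nil .nil).elim
  | cons h r =>
    exact ⟨_, h, r, fun w => by
      simpa using (isHamiltonianCycle_iff_isCycle_and_support_count_tail_eq_one.1 hq).2 w⟩

/-- Deleting a vertex from a Hamiltonian cycle leaves a Hamiltonian path through the other
vertices. -/
lemma IsHamiltonianCycle.connected_induce_ne {p : G.Walk x x} (hp : p.IsHamiltonianCycle)
    (z : V) : (G.induce {w | w ≠ z}).Connected := by
  obtain ⟨y, hzy, r, hr⟩ := hp.exists_adj_isHamiltonian z
  refine (connected_iff_exists_forall_reachable _).2 ⟨⟨y, hzy.ne'⟩, fun w => ?_⟩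
  have hw := hr.mem_support w.1
  exact ((r.takeUntil w hw).induce _ fun t ht (htz : t = z) =>
    endpoint_notMem_support_takeUntil hr.isPath hw w.2.symm (htz ▸ ht)).reachable

lemma IsHamiltonianCycle.biconnected {p : G.Walk x x} (hp : p.IsHamiltonianCycle) :
    Biconnected G :=
  ⟨hp.connected, fun z hz => hz.2 (hp.connected_induce_ne z)⟩

end SimpleGraph.Walk

namespace Fin

variable {n : ℕ} [NeZero n]

lemma val_iterate_add_one {u : Fin n} {k : ℕ} (h : u.val + k < n) :
    ((· + 1)^[k] u).val = u.val + k := by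
  induction k with
  | zero => rfl
  | succ k ih =>
    rw [Function.iterate_succ_apply', val_add_one_of_lt' (by rw [ih (by omega)]; omega),
      ih (by omega), Nat.add_assoc]

lemma exists_lt_iterate_add_one_eq_iff {u x : Fin n} {m : ℕ} (hm : u.val + m ≤ n) :
    (∃ k < m, (· + 1)^[k] u = x) ↔ u ≤ x ∧ x.val < u.val + m := by
  rw [le_def]
  constructor
  · rintro ⟨k, hk, rfl⟩
    rw [val_iterate_add_one (by omega)]
    omega
  · rintro ⟨hux, hx⟩
    exact ⟨x.val - u.val, by omega, Fin.ext (by rw [val_iterate_add_one (by omega)]; omega)⟩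

lemma one_lt_val_sub_of_ne_add_one {u v : Fin n} (hlt : u < v) (h : v ≠ u + 1) :
    1 < v.val - u.val := by
  by_contra! h'
  refine h (Fin.ext ?_)
  rw [val_add_one_of_lt' (by omega)]
  omega

lemma val_sub_lt_of_ne_add_one {u v : Fin n} (hlt : u < v) (h : u ≠ v + 1) :
    v.val - u.val < n - 1 := by
  by_contra! h'
  refine h (Fin.ext ?_)
  have hvn : v.val + 1 = n := by omega
  rw [val_add, val_one', Nat.add_mod_mod, hvn, Nat.mod_self]
  omega

end Fin

namespace SimpleGraph

lemma exists_walk_support_eq_map_range {G : SimpleGraph V} (f : ℕ → V)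
    (hf : ∀ k, G.Adj (f k) (f (k + 1))) (d : ℕ) :
    ∃ p : G.Walk (f 0) (f d), p.support = (List.range (d + 1)).map f ∧
      p.edges = (List.range d).map fun k => s(f k, f (k + 1)) := by
  induction d with
  | zero => exact ⟨.nil, by simp, by simp⟩
  | succ d ih =>
    obtain ⟨p, hs, he⟩ := ih
    exact ⟨p.concat (hf d), by simp [Walk.support_concat, hs, List.range_succ (n := d + 1)],
      by simp [Walk.edges_concat, he, List.range_succ]⟩

lemma exists_isPath_Icc {n : ℕ} [NeZero n] {G : SimpleGraph (Fin n)}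
    (hadj : ∀ i, G.Adj i (i + 1)) {u v : Fin n} (huv : u ≤ v) :
    ∃ p : G.Walk u v, p.IsPath ∧ (∀ x, x ∈ p.support ↔ x ∈ Set.Icc u v) ∧
      ∀ e, e ∈ p.edges ↔ ∃ i, u ≤ i ∧ i < v ∧ e = s(i, i + 1) := by
  obtain ⟨d, hd⟩ : ∃ d, u.val + d = v.val := ⟨v.val - u.val, by rw [Fin.le_def] at huv; omega⟩
  have hdn : u.val + d < n := hd ▸ v.isLt
  have hval : ∀ k ≤ d, ((· + 1)^[k] u).val = u.val + k := fun k hk =>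
    Fin.val_iterate_add_one (by omega)
  have hv : (· + 1)^[d] u = v := Fin.ext (by rw [hval d le_rfl]; omega)
  obtain ⟨p, hs, he⟩ := exists_walk_support_eq_map_range (fun k => (· + 1)^[k] u)
    (fun k => by simpa only [Function.iterate_succ_apply'] using hadj _) d
  refine ⟨p.copy (Function.iterate_zero_apply _ _) hv, ?_, fun x => ?_, fun e => ?_⟩
  · rw [Walk.isPath_copy, Walk.isPath_def, hs]
    refine List.nodup_range.map_on fun k hk l hl hkl => ?_
    have := congrArg Fin.val hkl
    rw [hval k (by simp at hk; omega), hval l (by simp at hl; omega)] at this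
    omega
  · rw [Walk.support_copy, hs, List.mem_map]
    simp only [List.mem_range]
    rw [Fin.exists_lt_iterate_add_one_eq_iff (by omega), Set.mem_Icc, Fin.le_def (a := x)]
    omega
  · rw [Walk.edges_copy, he, List.mem_map]
    simp only [List.mem_range, Function.iterate_succ_apply']
    constructor
    · rintro ⟨k, hk, rfl⟩
      obtain ⟨hu, hlt⟩ := (Fin.exists_lt_iterate_add_one_eq_iff (m := d) hdn.le).1 ⟨k, hk, rfl⟩
      exact ⟨_, hu, Fin.lt_def.2 (by omega), rfl⟩
    · rintro ⟨i, hui, hiv, rfl⟩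
      obtain ⟨k, hk, rfl⟩ := (Fin.exists_lt_iterate_add_one_eq_iff (m := d) hdn.le).2
        ⟨hui, Fin.lt_def.1 hiv |>.trans_le (by omega)⟩
      exact ⟨k, hk, rfl⟩

end SimpleGraph

theorem induce_of_inner_edge_general {n : ℕ} [NeZero n] {G : SimpleGraph (Fin n)}
    (hO : Outerplanar G)
    {a : Fin n} (c : G.Walk a a)
    (hce : {e | e ∈ c.edges} = {e : Sym2 (Fin n) | ∃ i : Fin n, e = s(i, i + 1)})
    {u v : Fin n} (huv : G.Adj u v) (hlt : u < v)
    (hinner : ∀ i : Fin n, s(u, v) ≠ s(i, i + 1)) :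
    1 < v.val - u.val ∧ v.val - u.val < n - 1 ∧
      Biconnected (G.induce (Set.Icc u v)) ∧
      Outerplanar (G.induce (Set.Icc u v)) ∧
      ∃ c' : (G.induce (Set.Icc u v)).Walk ⟨u, le_refl u, le_of_lt hlt⟩
          ⟨u, le_refl u, le_of_lt hlt⟩,
        c'.IsHamiltonianCycle ∧
          {e : Sym2 (Fin n) | ∃ e' ∈ c'.edges, Sym2.map Subtype.val e' = e} =
            insert s(u, v)
              {e : Sym2 (Fin n) | ∃ i : Fin n, u ≤ i ∧ i < v ∧ e = s(i, i + 1)} := by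
  have hadj : ∀ i : Fin n, G.Adj i (i + 1) := fun i =>
    c.adj_of_mem_edges (hce.symm ▸ ⟨i, rfl⟩ : s(i, i + 1) ∈ {e | e ∈ c.edges})
  obtain ⟨p, hp, hsupp, hedges⟩ := exists_isPath_Icc hadj hlt.le
  have hp_uv : s(u, v) ∉ p.edges := fun h => by
    obtain ⟨i, -, -, hi⟩ := (hedges _).1 h
    exact hinner i hi
  obtain ⟨c', hc', hc'_edges⟩ :=
    hp.exists_isHamiltonianCycle_induce hsupp huv hp_uv ⟨le_refl u, le_of_lt hlt⟩
  refine ⟨Fin.one_lt_val_sub_of_ne_add_one hlt fun h => hinner u (by rw [h]),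
    Fin.val_sub_lt_of_ne_add_one hlt fun h => hinner v (by rw [h, Sym2.eq_swap]),
    hc'.biconnected, hO.induce _, c', hc', ?_⟩
  rw [hc'_edges]
  exact congrArg _ (Set.ext hedges)

/-- In a biconnected outerplanar graph on `Fin n` whose Hamiltonian cycle
visits `0, 1, …, n-1` in this cyclic order, every inner edge `{u,v}` with
`u < v` satisfies `1 < v - u < n - 1`, and the subgraph induced on
`{u, …, v}` is biconnected outerplanar with Hamiltonian cycle consisting of
the path `u, u+1, …, v` together with the edge `{u,v}`. -/
theorem induce_of_inner_edge {n : ℕ} [NeZero n] (hn : 3 ≤ n) {G : SimpleGraph (Fin n)}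
    (hB : Biconnected G) (hO : Outerplanar G)
    {a : Fin n} (c : G.Walk a a) (hc : c.IsHamiltonianCycle)
    (hce : {e | e ∈ c.edges} = {e : Sym2 (Fin n) | ∃ i : Fin n, e = s(i, i + 1)})
    {u v : Fin n} (huv : G.Adj u v) (hlt : u < v)
    (hinner : ∀ i : Fin n, s(u, v) ≠ s(i, i + 1)) :
    1 < v.val - u.val ∧ v.val - u.val < n - 1 ∧
      Biconnected (G.induce (Set.Icc u v)) ∧
      Outerplanar (G.induce (Set.Icc u v)) ∧
      ∃ c' : (G.induce (Set.Icc u v)).Walk ⟨u, le_refl u, le_of_lt hlt⟩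
          ⟨u, le_refl u, le_of_lt hlt⟩,
        c'.IsHamiltonianCycle ∧
          {e : Sym2 (Fin n) | ∃ e' ∈ c'.edges, Sym2.map Subtype.val e' = e} =
            insert s(u, v)
              {e : Sym2 (Fin n) | ∃ i : Fin n, u ≤ i ∧ i < v ∧ e = s(i, i + 1)} :=
  induce_of_inner_edge_general hO c hce huv hlt hinner
end

section
/- Let u be a vertex of degree greater than 2 in a biconnected outerplanar graph G. Then u is adjacent to at most two vertices of degree 2. -/
open SimpleGraph

universe u₁ u₂

variable {V : Type u₁} {W : Type u₂}

/-! If `u` had three neighbours `v₁ v₂ v₃` of degree two, the second neighbour of each `vᵢ`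
would lie outside `{u, v₁, v₂, v₃}`: two adjacent degree-two neighbours of `u` would form a
component of `G - u`, forcing `deg u ≤ 2`. The `vᵢ` are then leaves of the connected graph
`G - u`, so the remaining vertices still induce a connected graph. Taking `{u}` and that rest
as one side and the `vᵢ` as the other gives a `K₂,₃` minor of `G`; adding the apex of the cone
to the first side gives a `K₃,₃` minor of the cone, contradicting outerplanarity. -/

open Function

theorem cone_adj_some {G : SimpleGraph V} {a b : V} :
    (cone G).Adj (some a) (some b) ↔ G.Adj a b := by
  simpa [cone, G.adj_comm b a] using @Adj.ne _ G a b

theorem cone_adj_none {G : SimpleGraph V} (a : V) : (cone G).Adj none (some a) := by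
  simp [cone, fromRel_adj]

namespace IsMinorOf

variable {X : Type*} {G : SimpleGraph V} {H : SimpleGraph W}

theorem of_injective_hom {H' : SimpleGraph X} (φ : H' →g H) (hφ : Injective φ)
    (h : IsMinorOf H G) : IsMinorOf H' G := by
  obtain ⟨f, hconn, hadj⟩ := h
  have hfiber : ∀ v x, (f v).bind (partialInv φ) = some x ↔ f v = some (φ x) := by
    intro v x
    cases f v with
    | none => simp
    | some w => simpa [eq_comm] using hφ.isPartialInv x w
  refine ⟨fun v => (f v).bind (partialInv φ), fun x => ?_, fun x y hxy => ?_⟩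
  · rw [show {v | (f v).bind (partialInv φ) = some x} = {v | f v = some (φ x)} from
      Set.ext (hfiber · x)]
    exact hconn (φ x)
  · obtain ⟨v₁, v₂, h₁, h₂, h⟩ := hadj _ _ (φ.map_adj hxy)
    exact ⟨v₁, v₂, (hfiber _ _).2 h₁, (hfiber _ _).2 h₂, h⟩

theorem cone (h : IsMinorOf H G) : IsMinorOf (_root_.cone H) (_root_.cone G) := by
  obtain ⟨f, hconn, hadj⟩ := h
  refine ⟨fun o => o.elim (some none) fun v => (f v).map some, ?_, ?_⟩
  · rintro (_ | w)
    · have : {o : Option V | o.elim (some none) (fun v => (f v).map some) = some none} =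
          {none} := by
        ext (_ | v) <;> simp
      rw [this, induce_singleton_eq_top]
      exact connected_top
    · refine (hconn w).map ⟨fun x => ⟨some x.1, by simp [show f x = some w from x.2]⟩,
        fun h => cone_adj_some.2 h⟩ ?_
      rintro ⟨(_ | v), hv⟩
      · simp at hv
      · exact ⟨⟨v, by simpa using hv⟩, rfl⟩
  · rintro (_ | w₁) (_ | w₂) hw
    · exact absurd rfl hw.ne
    · obtain ⟨v, hv⟩ := (hconn w₂).nonempty
      exact ⟨none, v, rfl, by simp [hv.out], cone_adj_none v⟩
    · obtain ⟨v, hv⟩ := (hconn w₁).nonempty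
      exact ⟨v, none, by simp [hv.out], rfl, (cone_adj_none v).symm⟩
    · obtain ⟨v₁, v₂, h₁, h₂, h⟩ := hadj _ _ (cone_adj_some.1 hw)
      exact ⟨some v₁, some v₂, by simp [h₁], by simp [h₂], cone_adj_some.2 h⟩

theorem completeBipartiteGraph_of_embedding {α β γ : Type*}
    (h : IsMinorOf (completeBipartiteGraph α β) G) (e : γ ↪ β) :
    IsMinorOf (completeBipartiteGraph α γ) G :=
  h.of_injective_hom ⟨Sum.map id e, by rintro (_ | _) (_ | _) <;> simp⟩
    (Sum.map_injective.2 ⟨injective_id, e.injective⟩)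

end IsMinorOf

/-- The apex of the cone together with the two-vertex side of `K₂,₃` forms one side of a
`K₃,₃`. -/
theorem Outerplanar.not_isMinorOf_completeBipartiteGraph_two_three {G : SimpleGraph V}
    (hO : Outerplanar G) : ¬ IsMinorOf (completeBipartiteGraph (Fin 2) (Fin 3)) G := by
  intro h
  let φ : completeBipartiteGraph (Fin 3) (Fin 3) →g
      cone (completeBipartiteGraph (Fin 2) (Fin 3)) :=
    ⟨Sum.elim ![none, some (.inl 0), some (.inl 1)] (some ∘ .inr), by
      rintro (i | i) (j | j) hij <;> fin_cases i <;> fin_cases j <;>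
        simp_all [cone_adj_none, cone_adj_some, adj_comm _ _ none]⟩
  exact hO.2 (h.cone.of_injective_hom φ (by decide))

section Degree

variable {G : SimpleGraph V} {v a b : V}

theorem neighborSet_eq_pair_of_deg_eq_two (hd : deg G v = 2) (ha : G.Adj v a) (hb : G.Adj v b)
    (hab : a ≠ b) : G.neighborSet v = {a, b} :=
  (Set.eq_of_subset_of_ncard_le (Set.pair_subset ha hb) (by rw [Set.ncard_pair hab]; exact hd.le)
    (Set.finite_of_ncard_pos (s := G.neighborSet v) (by unfold deg at hd; omega))).symm

theorem exists_neighborSet_eq_pair_of_deg_eq_two (hd : deg G v = 2) (ha : G.Adj v a) :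
    ∃ b, b ≠ a ∧ G.neighborSet v = {a, b} := by
  obtain ⟨b, hb, hba⟩ :=
    Set.exists_ne_of_one_lt_ncard (s := G.neighborSet v) (by unfold deg at hd; omega) a
  exact ⟨b, hba, neighborSet_eq_pair_of_deg_eq_two hd ha hb hba.symm⟩

end Degree

theorem SimpleGraph.Preconnected.mem_of_adj_mem {α : Type*} {H : SimpleGraph α}
    (hH : H.Preconnected) {C : Set α} (hC : ∀ x y, H.Adj x y → x ∈ C → y ∈ C) {a : α}
    (ha : a ∈ C) (b : α) : b ∈ C := by
  obtain ⟨p⟩ := hH a b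
  induction p with
  | nil => exact ha
  | cons h _ ih => exact ih (hC _ _ h ha)

section DeleteVertex

variable {G : SimpleGraph V} {u : V}

/-- Two adjacent degree-two neighbours of `u` span a component of `G - u`. -/
theorem deg_le_two_of_adj_of_deg_eq_two (hGu : (G.induce {x | x ≠ u}).Preconnected) {a b : V}
    (ha : G.Adj u a) (hb : G.Adj u b) (hab : G.Adj a b) (hda : deg G a = 2)
    (hdb : deg G b = 2) : deg G u ≤ 2 := by
  have hNa := neighborSet_eq_pair_of_deg_eq_two hda ha.symm hab hb.ne
  have hNb := neighborSet_eq_pair_of_deg_eq_two hdb hb.symm hab.symm ha.ne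
  have hclosed : ∀ x y : {x | x ≠ u}, G.Adj x y →
      x.1 ∈ ({a, b} : Set V) → y.1 ∈ ({a, b} : Set V) := by
    rintro x ⟨y, hyu⟩ hxy (hx | hx)
    · rw [← mem_neighborSet, hx, hNa] at hxy
      exact .inr (hxy.resolve_left hyu)
    · rw [← mem_neighborSet, hx, hNb] at hxy
      exact .inl (hxy.resolve_left hyu)
  have hsub : G.neighborSet u ⊆ {a, b} := fun x hx =>
    hGu.mem_of_adj_mem (C := {x | x.1 ∈ ({a, b} : Set V)}) hclosed (a := ⟨a, ha.ne'⟩)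
      (by simp) ⟨x, hx.ne'⟩
  calc deg G u ≤ ({a, b} : Set V).ncard := Set.ncard_le_ncard hsub
    _ ≤ 2 := (Set.ncard_insert_le a {b}).trans (by simp)

theorem exists_neighborSet_eq_pair_of_two_lt_deg (hGu : (G.induce {x | x ≠ u}).Preconnected)
    (hu : 2 < deg G u) {s : V} (hus : G.Adj u s) (hds : deg G s = 2) :
    ∃ w, w ≠ u ∧ ¬ (G.Adj u w ∧ deg G w = 2) ∧ G.neighborSet s = {u, w} := by
  obtain ⟨w, hwu, hw⟩ := exists_neighborSet_eq_pair_of_deg_eq_two hds hus.symm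
  refine ⟨w, hwu, fun ⟨huw, hdw⟩ => ?_, hw⟩
  have hsw : G.Adj s w := by simp [← mem_neighborSet, hw]
  exact hu.not_ge (deg_le_two_of_adj_of_deg_eq_two hGu hus huw hsw hds hdw)

theorem preconnected_induce_of_neighborSet_subset_pair
    (hGu : (G.induce {x | x ≠ u}).Preconnected) {S : Set V}
    (hS : ∀ s ∈ S, ∃ w, G.neighborSet s ⊆ {u, w}) :
    (G.induce {x | x ≠ u ∧ x ∉ S}).Preconnected := by
  have hleaves := hGu.induce_of_degree_eq_one (s := {x | x.1 ∉ S}) <| by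
    rintro ⟨s, _⟩ hs ⟨y, hyu⟩ hy ⟨z, hzu⟩ hz
    obtain ⟨w, hw⟩ := hS s (not_not.1 hs)
    have hyw : y = w := (hw hy).resolve_left hyu
    have hzw : z = w := (hw hz).resolve_left hzu
    simp [hyw, hzw]
  refine hleaves.map ⟨fun x => ⟨x.1.1, x.1.2, x.2⟩, fun h => h⟩ ?_
  rintro ⟨x, hxu, hxS⟩
  exact ⟨⟨⟨x, hxu⟩, hxS⟩, rfl⟩

end DeleteVertex

/-- Branch sets: `{u}` and `V \ ({u} ∪ S)` on one side, one singleton per vertex of `S` on the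
other. -/
theorem isMinorOf_completeBipartiteGraph_two {G : SimpleGraph V} {u : V} {S : Set V}
    (hS : ∀ s ∈ S, G.Adj u s) (hB : (G.induce {x | x ≠ u ∧ x ∉ S}).Connected)
    (hSB : ∀ s ∈ S, ∃ w, w ≠ u ∧ w ∉ S ∧ G.Adj s w) :
    IsMinorOf (completeBipartiteGraph (Fin 2) S) G := by
  classical
  have huS : u ∉ S := fun h => (hS u h).ne rfl
  let f : V → Option (Fin 2 ⊕ S) := fun x =>
    if x = u then some (.inl 0) else if h : x ∈ S then some (.inr ⟨x, h⟩) else some (.inl 1)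
  have hf0 : {x | f x = some (.inl 0)} = {u} := by
    ext x; by_cases hx : x = u <;> by_cases hxS : x ∈ S <;> simp [f, hx, hxS]
  have hf1 : {x | f x = some (.inl 1)} = {x | x ≠ u ∧ x ∉ S} := by
    ext x; by_cases hx : x = u <;> by_cases hxS : x ∈ S <;> simp [f, hx, hxS]
  have hfS : ∀ s : S, {x | f x = some (.inr s)} = {s.1} := by
    rintro ⟨s, hs⟩
    ext x; by_cases hx : x = u <;> by_cases hxS : x ∈ S <;> simp [f, hx, hxS] <;> grind
  have hedge : ∀ i (s : S),
      ∃ v₁ v₂, f v₁ = some (.inl i) ∧ f v₂ = some (.inr s) ∧ G.Adj v₁ v₂ := by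
    intro i s
    have hs : f s = some (.inr s) := by simp [f, (hS s s.2).ne']
    match i with
    | 0 => exact ⟨u, s, by simp [f], hs, hS s s.2⟩
    | 1 =>
      obtain ⟨w, hwu, hwS, hsw⟩ := hSB s s.2
      exact ⟨w, s, by simp [f, hwu, hwS], hs, hsw.symm⟩
  refine ⟨f, ?_, ?_⟩
  · rintro (i | s)
    · match i with
      | 0 => rw [hf0, induce_singleton_eq_top]; exact connected_top
      | 1 => rwa [hf1]
    · rw [hfS, induce_singleton_eq_top]
      exact connected_top
  · rintro (i | s) (j | t) hadj
    · simp at hadj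
    · exact hedge i t
    · obtain ⟨v₁, v₂, h₁, h₂, h⟩ := hedge j s
      exact ⟨v₂, v₁, h₂, h₁, h.symm⟩
    · simp at hadj

theorem adjacent_degree_two_le_two_general {G : SimpleGraph V}
    (hB : Biconnected G) (hO : Outerplanar G) {u : V} (hu : 2 < deg G u) :
    ({v : V | G.Adj u v ∧ deg G v = 2}).ncard ≤ 2 := by
  set S := {v : V | G.Adj u v ∧ deg G v = 2}
  by_contra! hS
  have hGu : (G.induce {x | x ≠ u}).Connected := not_not.1 fun h => hB.2 u ⟨hB.1, h⟩
  have hother : ∀ s ∈ S, ∃ w, w ≠ u ∧ w ∉ S ∧ G.neighborSet s = {u, w} := fun s hs =>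
    exists_neighborSet_eq_pair_of_two_lt_deg hGu.preconnected hu hs.1 hs.2
  obtain ⟨s, hs⟩ := Set.nonempty_of_ncard_ne_zero (s := S) (by omega)
  obtain ⟨w, hwu, hwS, -⟩ := hother s hs
  have hBconn : (G.induce {x | x ≠ u ∧ x ∉ S}).Connected :=
    (connected_iff _).2 ⟨preconnected_induce_of_neighborSet_subset_pair hGu.preconnected
      fun s hs => (hother s hs).imp fun _ h => h.2.2.le, ⟨⟨w, hwu, hwS⟩⟩⟩
  have hminor := isMinorOf_completeBipartiteGraph_two (fun s hs => hs.1) hBconn fun s hs =>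
    (hother s hs).imp fun w ⟨hwu, hwS, hw⟩ => ⟨hwu, hwS, by simp [← mem_neighborSet, hw]⟩
  have : Finite S := Set.finite_of_ncard_pos (s := S) (by omega)
  obtain ⟨e, -⟩ := Fin.Embedding.exists_embedding_disjoint_range_of_add_le_Nat_card
    (s := (∅ : Set S)) (n := 3) (by rw [Set.ncard_empty, zero_add, Nat.card_coe_set_eq]; exact hS)
  exact hO.not_isMinorOf_completeBipartiteGraph_two_three
    (hminor.completeBipartiteGraph_of_embedding e)

/-- In a biconnected outerplanar graph, a vertex of degree greater than two
is adjacent to at most two vertices of degree two. -/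
theorem adjacent_degree_two_le_two [Fintype V] {G : SimpleGraph V}
    (hB : Biconnected G) (hO : Outerplanar G) {u : V} (hu : 2 < deg G u) :
    ({v : V | G.Adj u v ∧ deg G v = 2}).ncard ≤ 2 :=
  adjacent_degree_two_le_two_general hB hO hu
end
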